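/- (Monotonicity of outer-variable sets) Let Π be a DQBF prefix and let x and y be variables of Π. If y ∈ Outer(x), then Outer(y) ⊆ Outer(x). -/
import Mathlib


/-! ## Literals, clauses, DQBFs -/

structure Lit (V : Type) where
  var : V
  pos : Bool
deriving DecidableEq

def Lit.negate {V : Type} (l : Lit V) : Lit V := ⟨l.var, !l.pos⟩

abbrev Clause (V : Type) [DecidableEq V] : Type := Finset (Lit V)

/-- An S-form DQBF: universal variables `U`, existential variables `E`,
dependency sets `dep` (only meaningful on `E`), and a CNF matrix. -/
structure DQBF (V : Type) [DecidableEq V] where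
  U : Finset V
  E : Finset V
  dep : V → Finset V
  matrix : Finset (Clause V)

variable {V : Type} [DecidableEq V]

/-- Well-formedness of a DQBF. -/
def DQBF.WF (ψ : DQBF V) : Prop :=
  Disjoint ψ.U ψ.E ∧ (∀ x ∈ ψ.E, ψ.dep x ⊆ ψ.U) ∧
    ∀ C ∈ ψ.matrix, ∀ l ∈ C, l.var ∈ ψ.U ∪ ψ.E

/-- Dependency set with the convention `D_u = {u}` for universal variables. -/
def DQBF.depOf (ψ : DQBF V) (y : V) : Finset V := if y ∈ ψ.U then {y} else ψ.dep y

/-! ## Semantics -/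

def Clause.Sat (β : V → Bool) (C : Clause V) : Prop := ∃ l ∈ C, β l.var = l.pos

/-- A Skolem function set respects the dependency sets if the value of each
existential variable only depends on the assignment to its dependency set. -/
def DQBF.Respects (ψ : DQBF V) (f : V → (V → Bool) → Bool) : Prop :=
  ∀ x ∈ ψ.E, ∀ β γ : V → Bool, (∀ u ∈ ψ.dep x, β u = γ u) → f x β = f x γ

/-- The completed assignment `β ∪ f(β)`. -/
def DQBF.Completed (ψ : DQBF V) (f : V → (V → Bool) → Bool) (β : V → Bool) : V → Bool :=
  fun v => if v ∈ ψ.E then f v β else β v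

def DQBF.IsModel (ψ : DQBF V) (f : V → (V → Bool) → Bool) : Prop :=
  ψ.Respects f ∧ ∀ β : V → Bool, ∀ C ∈ ψ.matrix, Clause.Sat (ψ.Completed f β) C

def DQBF.IsTrue (ψ : DQBF V) : Prop := ∃ f, ψ.IsModel f

/-- Flip the value of variable `u` in an assignment. -/
def flipAt (u : V) (α : V → Bool) : V → Bool := fun w => if w = u then !(α w) else α w

/-- `(α, x, u)` is a dependency witness for the Skolem function set `f`. -/
def DepWitness (ψ : DQBF V) (f : V → (V → Bool) → Bool) (α : V → Bool) (x u : V) : Prop :=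
  f x α ≠ f x (flipAt u α)

/-! ## Resolution paths and dependency schemes -/

/-- The clauses of the matrix containing the literal `w`. -/
def DQBF.litClauses (ψ : DQBF V) (w : Lit V) : Finset (Clause V) :=
  ψ.matrix.filter fun C => w ∈ C

/-- `S_u`: the existential variables depending on `u`. -/
def DQBF.Sset (ψ : DQBF V) (u : V) : Finset V := ψ.E.filter fun x => u ∈ ψ.dep x

/-- `pathl^pu(w, ψ, χ, S)`: the least set of literals on `S`-variables reachable by a
`w`-pure resolution path starting from the clauses of `χ`. -/
inductive PathLPU (ψ : DQBF V) (w : Lit V) (χ : Finset (Clause V)) (S : Finset V) :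
    Lit V → Prop
  | base {C : Clause V} {l : Lit V} : C ∈ χ → l ∈ C → l.var ∈ S → PathLPU ψ w χ S l
  | step {p l : Lit V} {Ecl : Clause V} :
      PathLPU ψ w χ S p → Ecl ∈ ψ.matrix → p.negate ∈ Ecl → w.negate ∉ Ecl →
      l ∈ Ecl → l ≠ p.negate → l.var ∈ S → PathLPU ψ w χ S l

/-- `pathc^pu(w, ψ, χ, S)`: the corresponding set of reachable clauses. -/
inductive PathCPU (ψ : DQBF V) (w : Lit V) (χ : Finset (Clause V)) (S : Finset V) :
    Clause V → Prop
  | base {C : Clause V} : C ∈ χ → PathCPU ψ w χ S C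
  | step {p : Lit V} {Ecl : Clause V} :
      PathLPU ψ w χ S p → Ecl ∈ ψ.matrix → p.negate ∈ Ecl → w.negate ∉ Ecl →
      PathCPU ψ w χ S Ecl

/-- `pathl^rrs(ψ, χ, S)`: the analogous closure without the purity requirement. -/
inductive PathLRRS (ψ : DQBF V) (χ : Finset (Clause V)) (S : Finset V) : Lit V → Prop
  | base {C : Clause V} {l : Lit V} : C ∈ χ → l ∈ C → l.var ∈ S → PathLRRS ψ χ S l
  | step {p l : Lit V} {Ecl : Clause V} :
      PathLRRS ψ χ S p → Ecl ∈ ψ.matrix → p.negate ∈ Ecl →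
      l ∈ Ecl → l ≠ p.negate → l.var ∈ S → PathLRRS ψ χ S l

/-- `w ⤳ l` (pure path connection). -/
def ConnPU (ψ : DQBF V) (w l : Lit V) : Prop :=
  PathLPU ψ w (ψ.litClauses w) (ψ.Sset w.var) l

/-- `w ⤳ʳ l` (reflexive resolution path connection). -/
def ConnRRS (ψ : DQBF V) (w l : Lit V) : Prop :=
  PathLRRS ψ (ψ.litClauses w) (ψ.Sset w.var) l

/-- The pure universal dependency scheme `D^pu`. -/
def Dpu (ψ : DQBF V) (u x : V) : Prop :=
  u ∈ ψ.dep x ∧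
    ((ConnPU ψ ⟨u, true⟩ ⟨x, true⟩ ∧ ConnPU ψ ⟨u, false⟩ ⟨x, false⟩) ∨
      (ConnPU ψ ⟨u, false⟩ ⟨x, true⟩ ∧ ConnPU ψ ⟨u, true⟩ ⟨x, false⟩))

/-- The reflexive resolution path dependency scheme `D^rrs`. -/
def Drrs (ψ : DQBF V) (u x : V) : Prop :=
  u ∈ ψ.dep x ∧
    ((ConnRRS ψ ⟨u, true⟩ ⟨x, true⟩ ∧ ConnRRS ψ ⟨u, false⟩ ⟨x, false⟩) ∨
      (ConnRRS ψ ⟨u, false⟩ ⟨x, true⟩ ∧ ConnRRS ψ ⟨u, true⟩ ⟨x, false⟩))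

/-- The trivial dependency scheme `D^trv`. -/
def Dtrv (ψ : DQBF V) (u x : V) : Prop := u ∈ ψ.dep x

/-! ## LDQ(D)-Res -/

/-- Derivability of a clause in LDQ(D)-Res from the matrix of `ψ`, for a
dependency relation `D`. -/
inductive LDQDeriv (ψ : DQBF V) (D : V → V → Prop) : Clause V → Prop
  | ax {C : Clause V} : C ∈ ψ.matrix → LDQDeriv ψ D C
  | red {C : Clause V} {w : Lit V} :
      LDQDeriv ψ D (insert w C) → w.var ∈ ψ.U → w ∉ C →
      (∀ l ∈ C, l.var ∈ ψ.E → ¬ D w.var l.var) → LDQDeriv ψ D C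
  | res {Ec Fc : Clause V} {x : V} :
      x ∈ ψ.E →
      LDQDeriv ψ D (insert ⟨x, false⟩ Ec) → LDQDeriv ψ D (insert ⟨x, true⟩ Fc) →
      (⟨x, false⟩ : Lit V) ∉ Ec → (⟨x, true⟩ : Lit V) ∉ Fc →
      (∀ v ∈ Ec, v.var ∈ ψ.U → v.negate ∈ Fc → ¬ D v.var x) →
      LDQDeriv ψ D (Ec ∪ Fc)

/-- A single valid LDQ(D)-Res step, given the list of previously derived clauses. -/
def LDQStep (ψ : DQBF V) (D : V → V → Prop) (prev : List (Clause V)) (C : Clause V) : Prop :=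
  C ∈ ψ.matrix ∨
    (∃ w : Lit V, w.var ∈ ψ.U ∧ w ∉ C ∧ insert w C ∈ prev ∧
      ∀ l ∈ C, l.var ∈ ψ.E → ¬ D w.var l.var) ∨
    (∃ (x : V) (Ec Fc : Clause V), x ∈ ψ.E ∧ C = Ec ∪ Fc ∧
      (⟨x, false⟩ : Lit V) ∉ Ec ∧ (⟨x, true⟩ : Lit V) ∉ Fc ∧
      insert (⟨x, false⟩ : Lit V) Ec ∈ prev ∧ insert (⟨x, true⟩ : Lit V) Fc ∈ prev ∧
      ∀ v ∈ Ec, v.var ∈ ψ.U → v.negate ∈ Fc → ¬ D v.var x)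

/-- An LDQ(D)-Res proof: a list of clauses, each a valid step from the earlier ones. -/
def IsLDQProof (ψ : DQBF V) (D : V → V → Prop) (π : List (Clause V)) : Prop :=
  ∀ i : Fin π.length, LDQStep ψ D (π.take i.val) (π.get i)

def IsLDQRefutation (ψ : DQBF V) (D : V → V → Prop) (π : List (Clause V)) : Prop :=
  IsLDQProof ψ D π ∧ (∅ : Clause V) ∈ π

/-- A single valid Q-Res step. -/
def QResStep (ψ : DQBF V) (prev : List (Clause V)) (C : Clause V) : Prop :=
  C ∈ ψ.matrix ∨
    (∃ w : Lit V, w.var ∈ ψ.U ∧ w ∉ C ∧ w.negate ∉ C ∧ insert w C ∈ prev ∧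
      ∀ l ∈ C, l.var ∈ ψ.E → w.var ∉ ψ.dep l.var) ∨
    (∃ (x : V) (Ec Fc : Clause V), x ∈ ψ.E ∧ C = Ec ∪ Fc ∧
      (⟨x, false⟩ : Lit V) ∉ Ec ∧ (⟨x, true⟩ : Lit V) ∉ Fc ∧
      insert (⟨x, false⟩ : Lit V) Ec ∈ prev ∧ insert (⟨x, true⟩ : Lit V) Fc ∈ prev ∧
      ∀ v ∈ Ec, v.var ∈ ψ.U → v.negate ∉ Fc)

def IsQResProof (ψ : DQBF V) (π : List (Clause V)) : Prop :=
  ∀ i : Fin π.length, QResStep ψ (π.take i.val) (π.get i)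

def IsQResRefutation (ψ : DQBF V) (π : List (Clause V)) : Prop :=
  IsQResProof ψ π ∧ (∅ : Clause V) ∈ π

/-! ## QBFs: DQBFs with a linear quantifier prefix -/

structure QBF (V : Type) [DecidableEq V] extends DQBF V where
  ord : V → ℕ

/-- Well-formedness of a QBF: dependency sets are induced by the prefix order. -/
def QBF.WF (ψ : QBF V) : Prop :=
  ψ.toDQBF.WF ∧
    (∀ a ∈ ψ.U ∪ ψ.E, ∀ b ∈ ψ.U ∪ ψ.E, ψ.ord a = ψ.ord b → a = b) ∧
    ∀ x ∈ ψ.E, ∀ u, u ∈ ψ.dep x ↔ u ∈ ψ.U ∧ ψ.ord u < ψ.ord x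

/-! ## IndExt-QU-Res -/

/-- The clause `¬α` of negations of the literals of a partial assignment `α`. -/
def negAssign (α : Finset (Lit V)) : Clause V := α.image Lit.negate

/-- Size of a DQBF. -/
def DQBF.size (ψ : DQBF V) : ℕ := ψ.U.card + ψ.E.card + ∑ C ∈ ψ.matrix, (C.card + 1)

/-- IndExt-QU-Res derivations: from the DQBF `ψ0`, reach a (possibly extended)
prefix together with a set of derived clauses, in the given number of steps. -/
inductive IndExtDeriv (ψ0 : DQBF V) : DQBF V → Finset (Clause V) → ℕ → Prop
  | start : IndExtDeriv ψ0 ψ0 ψ0.matrix 0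
  | res {ψ : DQBF V} {Γ : Finset (Clause V)} {n : ℕ} {Ec Fc : Clause V} {x : V} :
      IndExtDeriv ψ0 ψ Γ n → x ∈ ψ.E →
      (⟨x, false⟩ : Lit V) ∉ Ec → (⟨x, true⟩ : Lit V) ∉ Fc →
      insert (⟨x, false⟩ : Lit V) Ec ∈ Γ → insert (⟨x, true⟩ : Lit V) Fc ∈ Γ →
      IndExtDeriv ψ0 ψ (insert (Ec ∪ Fc) Γ) (n + 1)
  | red {ψ : DQBF V} {Γ : Finset (Clause V)} {n : ℕ} {C : Clause V} {w : Lit V} :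
      IndExtDeriv ψ0 ψ Γ n → insert w C ∈ Γ → w.var ∈ ψ.U → w ∉ C → w.negate ∉ C →
      (∀ l ∈ C, l.var ∈ ψ.E → w.var ∉ ψ.dep l.var) →
      IndExtDeriv ψ0 ψ (insert C Γ) (n + 1)
  | ext {ψ : DQBF V} {Γ : Finset (Clause V)} {n : ℕ} (α : Finset (Lit V)) (y1 y2 v : V) :
      IndExtDeriv ψ0 ψ Γ n →
      (∀ a ∈ α, a.var ∈ ψ.U) → v ∉ ψ.U ∪ ψ.E → y1 ∈ ψ.U ∪ ψ.E → y2 ∈ ψ.U ∪ ψ.E →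
      IndExtDeriv ψ0
        ⟨ψ.U, insert v ψ.E,
          Function.update ψ.dep v ((ψ.depOf y1 ∪ ψ.depOf y2) \ α.image Lit.var), ψ.matrix⟩
        (insert (negAssign α ∪ ({⟨v, true⟩, ⟨y1, true⟩} : Clause V))
          (insert (negAssign α ∪ ({⟨v, true⟩, ⟨y2, true⟩} : Clause V))
            (insert (negAssign α ∪ ({⟨v, false⟩, ⟨y1, false⟩, ⟨y2, false⟩} : Clause V)) Γ)))
        (n + 1)
  | weakU {ψ : DQBF V} {Γ : Finset (Clause V)} {n : ℕ} (v : V) :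
      IndExtDeriv ψ0 ψ Γ n → v ∉ ψ.U ∪ ψ.E →
      IndExtDeriv ψ0 ⟨insert v ψ.U, ψ.E, ψ.dep, ψ.matrix⟩ Γ (n + 1)
  | weakE {ψ : DQBF V} {Γ : Finset (Clause V)} {n : ℕ} (v : V) (Dv : Finset V) :
      IndExtDeriv ψ0 ψ Γ n → v ∉ ψ.U ∪ ψ.E → Dv ⊆ ψ.U →
      IndExtDeriv ψ0 ⟨ψ.U, insert v ψ.E, Function.update ψ.dep v Dv, ψ.matrix⟩ Γ (n + 1)

/-- Substituting variables in a clause. -/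
def Clause.subst (σ : V → V) (C : Clause V) : Clause V :=
  C.image fun l => (⟨σ l.var, l.pos⟩ : Lit V)

/-! ## Unit propagation, outer variables, and DQRAT(D^pu) -/

/-- Literals derivable by unit propagation from a (possibly infinite) clause set. -/
inductive UPLit (Φ : Set (Clause V)) : Lit V → Prop
  | unit {C : Clause V} {l : Lit V} : C ∈ Φ → l ∈ C →
      (∀ l' ∈ C, l' ≠ l → UPLit Φ l'.negate) → UPLit Φ l

/-- `Φ ⊢₁ ⊥`: unit propagation derives a conflict. -/
def UPBot (Φ : Set (Clause V)) : Prop := ∃ C ∈ Φ, ∀ l ∈ C, UPLit Φ l.negate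

/-- The unit clauses negating the literals of `C`. -/
def negUnits (C : Clause V) : Set (Clause V) := {D | ∃ l ∈ C, D = ({l.negate} : Clause V)}

def DQBF.Inner (ψ : DQBF V) (u : V) : Set V := {y | y ∈ ψ.E ∧ u ∈ ψ.dep y}

/-- The set of outer variables of a variable. -/
def DQBF.Outer (ψ : DQBF V) (x : V) : Set V :=
  if x ∈ ψ.U then
    {x} ∪ ((↑(ψ.U ∪ ψ.E) : Set V) ∩ ⋂ z ∈ ψ.Inner x, {y | ψ.depOf y ⊆ ψ.dep z \ {x}})
  else {y | y ∈ ψ.U ∪ ψ.E ∧ ψ.depOf y ⊆ ψ.dep x}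

/-- `y ≲_Π x`. -/
def outerLe (ψ : DQBF V) (y x : V) : Prop := y ∈ ψ.Outer x

/-- `D_C`, the union of the dependency sets of the variables of a clause. -/
def depClause (ψ : DQBF V) (C : Clause V) : Finset V := C.biUnion fun l => ψ.depOf l.var

/-- The unit clauses used in the DQRAT side condition: outer literals of `D` negated. -/
def ratUnits (ψ : DQBF V) (D : Clause V) (l : Lit V) : Set (Clause V) :=
  {Dc | ∃ x ∈ D, x ≠ l.negate ∧ outerLe ψ x.var l.var ∧ Dc = ({x.negate} : Clause V)}

/-- DQRAT(D^pu) derivations: sequences of DQBFs, each obtained from the previous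
one by one of the rules ATA, Del, UR, DQRAT∃, DQRAT∀, BPM, D^pu. -/
inductive DQRATDeriv (ψ0 : DQBF V) : DQBF V → ℕ → Prop
  | start : DQRATDeriv ψ0 ψ0 0
  | ata {ψ : DQBF V} {n : ℕ} (C : Clause V) :
      DQRATDeriv ψ0 ψ n → UPBot ((↑ψ.matrix : Set (Clause V)) ∪ negUnits C) →
      DQRATDeriv ψ0 ⟨ψ.U, ψ.E, ψ.dep, insert C ψ.matrix⟩ (n + 1)
  | del {ψ : DQBF V} {n : ℕ} (C : Clause V) :
      DQRATDeriv ψ0 ψ n → C ∈ ψ.matrix →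
      DQRATDeriv ψ0 ⟨ψ.U, ψ.E, ψ.dep, ψ.matrix.erase C⟩ (n + 1)
  | ur {ψ : DQBF V} {n : ℕ} (C : Clause V) (l : Lit V) :
      DQRATDeriv ψ0 ψ n → insert l C ∈ ψ.matrix → l ∉ C → l.var ∈ ψ.U →
      l.var ∉ depClause ψ C →
      DQRATDeriv ψ0 ⟨ψ.U, ψ.E, ψ.dep, insert C (ψ.matrix.erase (insert l C))⟩ (n + 1)
  | ratE {ψ : DQBF V} {n : ℕ} (C : Clause V) (l : Lit V) :
      DQRATDeriv ψ0 ψ n → l.var ∈ ψ.E → l ∉ C →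
      (∀ D ∈ ψ.matrix, l.negate ∈ D →
        UPBot ((↑ψ.matrix : Set (Clause V)) ∪ negUnits (insert l C) ∪ ratUnits ψ D l)) →
      DQRATDeriv ψ0 ⟨ψ.U, ψ.E, ψ.dep, insert (insert l C) ψ.matrix⟩ (n + 1)
  | ratA {ψ : DQBF V} {n : ℕ} (C : Clause V) (l : Lit V) :
      DQRATDeriv ψ0 ψ n → l.var ∈ ψ.U → l ∉ C → insert l C ∈ ψ.matrix →
      (∀ D ∈ ψ.matrix, l.negate ∈ D →
        UPBot ((↑ψ.matrix : Set (Clause V)) ∪ negUnits C ∪ {({l} : Clause V)} ∪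
          ratUnits ψ D l)) →
      DQRATDeriv ψ0 ⟨ψ.U, ψ.E, ψ.dep, insert C (ψ.matrix.erase (insert l C))⟩ (n + 1)
  | bpm {ψ : DQBF V} {n : ℕ} (ψ' : DQBF V) :
      DQRATDeriv ψ0 ψ n → ψ.U ⊆ ψ'.U → ψ.E ⊆ ψ'.E → Disjoint ψ'.U ψ'.E →
      (∀ x ∈ ψ.E, ψ'.dep x = ψ.dep x) → (∀ x ∈ ψ'.E, ψ'.dep x ⊆ ψ'.U) →
      ψ'.matrix = ψ.matrix →
      DQRATDeriv ψ0 ψ' (n + 1)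
  | dpuStep {ψ : DQBF V} {n : ℕ} (ψ' : DQBF V) :
      DQRATDeriv ψ0 ψ n → ψ'.U = ψ.U → ψ'.E = ψ.E → ψ'.matrix = ψ.matrix →
      (∀ u x, x ∈ ψ.E → u ∉ ψ'.dep x → (u ∉ ψ.dep x ∨ ¬ Dpu ψ u x)) →
      DQRATDeriv ψ0 ψ' (n + 1)

/-- A DQRAT(D^pu) refutation of `ψ0` with `n` steps. -/
def DQRATRefutable (ψ0 : DQBF V) (n : ℕ) : Prop :=
  ∃ ψ : DQBF V, DQRATDeriv ψ0 ψ n ∧ (∅ : Clause V) ∈ ψ.matrix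

/-! ## The ts-LQParity formulas -/

inductive PVar : Type where
  | x : ℕ → PVar
  | z : PVar
  | t : ℕ → PVar
  | s : ℕ → PVar
  | b : PVar
deriving DecidableEq

def L (v : PVar) (b : Bool) : Lit PVar := ⟨v, b⟩

/-- The four clauses of `xor_l(o1, o2, o, zl)`. -/
def xorl (o1 o2 o : PVar) (zl : Lit PVar) : Finset (Clause PVar) :=
  { {zl, L o1 false, L o2 false, L o false},
    {zl, L o1 true,  L o2 true,  L o false},
    {zl, L o1 false, L o2 true,  L o true},
    {zl, L o1 true,  L o2 false, L o true} }

def tsMatrix (N : ℕ) : Finset (Clause PVar) :=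
  xorl (.x 1) (.x 2) (.t 2) (L .z true) ∪
    (Finset.Icc 3 N).biUnion (fun i => xorl (.t (i - 1)) (.x i) (.t i) (L .z true)) ∪
    xorl (.x 1) (.x 2) (.s 2) (L .z false) ∪
    (Finset.Icc 3 N).biUnion (fun i => xorl (.s (i - 1)) (.x i) (.s i) (L .z false)) ∪
    {{L .z true, L (.t N) true}, {L .z false, L (.s N) false}}

def tsDep : PVar → Finset PVar
  | .t _ => {.z}
  | .s _ => {.z}
  | .b => {.z}
  | _ => ∅

/-- The QBF ts-LQParity(N), presented as a DQBF. -/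
def tsLQParity (N : ℕ) : DQBF PVar where
  U := {.z}
  E := (Finset.Icc 1 N).image PVar.x ∪ (Finset.Icc 2 N).image PVar.t ∪
    (Finset.Icc 2 N).image PVar.s
  dep := tsDep
  matrix := tsMatrix N

def bridgedMatrix (N : ℕ) : Finset (Clause PVar) :=
  tsMatrix N ∪
    { {L .z true, L (.t N) false, L .b true}, {L .z true, L (.t N) true, L .b false},
      {L .z false, L (.s N) false, L .b true}, {L .z false, L (.s N) true, L .b false} }

/-- The QBF Bridged ts-LQParity(N), presented as a DQBF. -/
def bridged (N : ℕ) : DQBF PVar where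
  U := {.z}
  E := (Finset.Icc 1 N).image PVar.x ∪ (Finset.Icc 2 N).image PVar.t ∪
    (Finset.Icc 2 N).image PVar.s ∪ {.b}
  dep := tsDep
  matrix := bridgedMatrix N

/-! ## The NP-hardness gadget -/

inductive GVar (W : Type) : Type where
  | v : W → GVar W
  | u : GVar W
  | x : GVar W
deriving DecidableEq

/-- The gadget DQBF `∀(V ∪ {u}) ∃x(V ∪ {u}). (⋁_{v ∈ V} v) ∨ u ∨ ¬x`. -/
def gadget {W : Type} [DecidableEq W] (Vs : Finset W) : DQBF (GVar W) where
  U := Vs.image GVar.v ∪ {GVar.u}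
  E := {GVar.x}
  dep := fun y => if y = GVar.x then Vs.image GVar.v ∪ {GVar.u} else ∅
  matrix := {Vs.image (fun w => (⟨GVar.v w, true⟩ : Lit (GVar W))) ∪
    ({⟨GVar.u, true⟩, ⟨GVar.x, false⟩} : Clause (GVar W))}

/-- The Skolem function `f_x = φ(V) ∧ u`. -/
def gadgetSkolem {W : Type} [DecidableEq W] (φ : Finset (Clause W)) :
    GVar W → (GVar W → Bool) → Bool := fun y β =>
  if y = GVar.x then
    (decide (∀ C ∈ φ, ∃ l ∈ C, β (GVar.v l.var) = l.pos)) && β GVar.u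
  else false

/-- Monotonicity of outer-variable sets. If `y ∈ Outer(x)` then
`Outer(y) ⊆ Outer(x)`. -/
theorem outer_mono {V : Type} [DecidableEq V] (ψ : DQBF V)
    (hdisj : Disjoint ψ.U ψ.E) (hdep : ∀ x ∈ ψ.E, ψ.dep x ⊆ ψ.U)
    (x y : V) (hx : x ∈ ψ.U ∪ ψ.E) (hy : y ∈ ψ.U ∪ ψ.E)
    (h : y ∈ ψ.Outer x) : ψ.Outer y ⊆ ψ.Outer x := by
  classical
  intro w hw
  by_cases hxU : x ∈ ψ.U
  · rw [DQBF.Outer, if_pos hxU] at h ⊢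
    rcases h with h | ⟨hyUE, hyI⟩
    · rw [Set.mem_singleton_iff] at h
      subst h
      rwa [DQBF.Outer, if_pos hxU] at hw
    · simp only [Set.mem_iInter, Set.mem_setOf_eq] at hyI
      by_cases hyU : y ∈ ψ.U
      · -- y universal
        have hIxy : ∀ z ∈ ψ.Inner x, z ∈ ψ.Inner y := by
          intro z hz
          have h1 := hyI z hz
          rw [DQBF.depOf, if_pos hyU, Finset.singleton_subset_iff,
            Finset.mem_sdiff] at h1
          exact ⟨hz.1, h1.1⟩
        rw [DQBF.Outer, if_pos hyU] at hw
        rcases hw with hw | ⟨hwUE, hwI⟩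
        · rw [Set.mem_singleton_iff] at hw
          subst hw
          exact Or.inr ⟨hyUE, by simp only [Set.mem_iInter, Set.mem_setOf_eq]; exact hyI⟩
        · simp only [Set.mem_iInter, Set.mem_setOf_eq] at hwI
          by_cases hwx : w = x
          · exact Or.inl (by simp [hwx])
          · refine Or.inr ⟨hwUE, ?_⟩
            simp only [Set.mem_iInter, Set.mem_setOf_eq]
            intro z hz
            have h2 := hwI z (hIxy z hz)
            intro a ha
            have h3 := h2 ha
            rw [Finset.mem_sdiff] at h3 ⊢
            refine ⟨h3.1, ?_⟩
            intro hax
            rw [Finset.mem_singleton] at hax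
            subst hax
            -- a = x ∈ depOf w
            by_cases hwU : w ∈ ψ.U
            · rw [DQBF.depOf, if_pos hwU, Finset.mem_singleton] at ha
              exact hwx ha.symm
            · rw [DQBF.depOf, if_neg hwU] at ha
              have hwE : w ∈ ψ.E := by
                simp only [Finset.coe_union, Set.mem_union, Finset.mem_coe] at hwUE
                tauto
              have hwInnerX : w ∈ ψ.Inner a := ⟨hwE, ha⟩
              have hwInnerY : w ∈ ψ.Inner y := hIxy w hwInnerX
              have h4 := hwI w hwInnerY
              rw [DQBF.depOf, if_neg hwU] at h4
              have := h4 hwInnerY.2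
              rw [Finset.mem_sdiff, Finset.mem_singleton] at this
              exact this.2 rfl
      · -- y existential
        refine Or.inr ⟨?_, ?_⟩
        · rw [DQBF.Outer, if_neg hyU] at hw
          exact hw.1
        · simp only [Set.mem_iInter, Set.mem_setOf_eq]
          intro z hz
          rw [DQBF.Outer, if_neg hyU] at hw
          have h1 : ψ.depOf w ⊆ ψ.dep y := hw.2
          have h2 : ψ.dep y ⊆ ψ.dep z \ {x} := by
            have := hyI z hz
            rwa [DQBF.depOf, if_neg hyU] at this
          exact h1.trans h2
  · -- x existential
    have hxE : x ∈ ψ.E := by rw [Finset.mem_union] at hx; tauto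
    rw [DQBF.Outer, if_neg hxU] at h ⊢
    obtain ⟨hyUE, hyd⟩ := h
    by_cases hyU : y ∈ ψ.U
    · rw [DQBF.Outer, if_pos hyU] at hw
      rcases hw with hw | ⟨hwUE, hwI⟩
      · rw [Set.mem_singleton_iff] at hw
        subst hw
        exact ⟨hyUE, hyd⟩
      · simp only [Set.mem_iInter, Set.mem_setOf_eq] at hwI
        have hyx : y ∈ ψ.dep x := by
          rw [DQBF.depOf, if_pos hyU, Finset.singleton_subset_iff] at hyd
          exact hyd
        have hxInner : x ∈ ψ.Inner y := ⟨hxE, hyx⟩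
        refine ⟨hwUE, (hwI x hxInner).trans ?_⟩
        exact Finset.sdiff_subset
    · rw [DQBF.Outer, if_neg hyU] at hw
      rw [DQBF.depOf, if_neg hyU] at hyd
      exact ⟨hw.1, hw.2.trans hyd⟩
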